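/- In a SETAF whose attack relation derives from inconsistency of supports in a knowledge base as follows — arguments are pairs (H, φ) with H ⊆ K consistent and φ ∈ CNbar(H), and a set of arguments X attacks (H, φ) iff the union of the conclusions of X together with some subset of H is inconsistent — the set Args(Δ) of all arguments whose supports lie inside a maximal consistent subset Δ of K is conflict-free. -/

import Mathlib

def consistent {L : Type*} (CNbar : Set L → Set L) (X : Set L) : Prop :=
  CNbar X ≠ Set.univ

/-- An argument over the KB `K`: a pair `(H, φ)` with `H ⊆ K` consistent and `φ ∈ CNbar H`. -/
def isArg {L : Type*} (CNbar : Set L → Set L) (K : Set L) (p : Set L × L) : Prop :=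
  p.1 ⊆ K ∧ consistent CNbar p.1 ∧ p.2 ∈ CNbar p.1

/-- Collective (undercut) attack: the union of the supports of `X` is consistent and the
conclusions of `X` together with some subset of the support of `p` are inconsistent. -/
def attacksArg {L : Type*} (CNbar : Set L → Set L) (X : Set (Set L × L)) (p : Set L × L) : Prop :=
  consistent CNbar (⋃ B ∈ X, B.1) ∧
  ∃ H' : Set L, H' ⊆ p.1 ∧ ¬ consistent CNbar (Prod.snd '' X ∪ H')

def ArgsOf {L : Type*} (CNbar : Set L → Set L) (K Δ : Set L) : Set (Set L × L) :=
  {p | isArg CNbar K p ∧ p.1 ⊆ Δ}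

/-! Conclusions of arguments supported in `Δ`, and `Δ` itself, lie in `CNbar Δ`, which is
consistent by idempotence; consistency passes to subsets, so nothing inside `Args(Δ)` can
produce the inconsistent set an attack requires. -/

section Consequence

variable {L : Type*} {CNbar : Set L → Set L}

theorem consistent.anti (hmono : ∀ X Y : Set L, X ⊆ Y → CNbar X ⊆ CNbar Y) {X Y : Set L}
    (hXY : X ⊆ Y) (hY : consistent CNbar Y) : consistent CNbar X := fun hX =>
  hY (Set.eq_univ_of_univ_subset (hX ▸ hmono X Y hXY))

theorem consistent.closure (hidem : ∀ X : Set L, CNbar (CNbar X) = CNbar X) {X : Set L}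
    (hX : consistent CNbar X) : consistent CNbar (CNbar X) := by
  rwa [consistent, hidem]

theorem snd_mem_closure_of_mem_ArgsOf (hmono : ∀ X Y : Set L, X ⊆ Y → CNbar X ⊆ CNbar Y)
    {K Δ : Set L} {p : Set L × L} (hp : p ∈ ArgsOf CNbar K Δ) : p.2 ∈ CNbar Δ :=
  hmono p.1 Δ hp.2 hp.1.2.2

theorem snd_image_union_subset_closure (hmono : ∀ X Y : Set L, X ⊆ Y → CNbar X ⊆ CNbar Y)
    (hexp : ∀ X : Set L, X ⊆ CNbar X) {K Δ H : Set L} {X : Set (Set L × L)}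
    (hX : X ⊆ ArgsOf CNbar K Δ) (hH : H ⊆ Δ) : Prod.snd '' X ∪ H ⊆ CNbar Δ :=
  Set.union_subset (Set.image_subset_iff.2 fun _ hB => snd_mem_closure_of_mem_ArgsOf hmono (hX hB))
    (hH.trans (hexp Δ))

end Consequence

theorem args_mcs_conflict_free_general {L : Type*} (CNbar : Set L → Set L)
    (hmono : ∀ X Y : Set L, X ⊆ Y → CNbar X ⊆ CNbar Y)
    (hexp : ∀ X : Set L, X ⊆ CNbar X)
    (hidem : ∀ X : Set L, CNbar (CNbar X) = CNbar X)
    (K Δ : Set L) (hΔcons : consistent CNbar Δ) :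
    ¬ ∃ X : Set (Set L × L), X ⊆ ArgsOf CNbar K Δ ∧
        ∃ p ∈ ArgsOf CNbar K Δ, attacksArg CNbar X p := by
  rintro ⟨X, hX, p, hp, -, H, hHp, hinc⟩
  have hsub : Prod.snd '' X ∪ H ⊆ CNbar Δ :=
    snd_image_union_subset_closure hmono hexp hX (hHp.trans hp.2)
  exact hinc ((hΔcons.closure hidem).anti hmono hsub)

theorem args_mcs_conflict_free {L : Type*} (CNbar : Set L → Set L)
    (hmono : ∀ X Y : Set L, X ⊆ Y → CNbar X ⊆ CNbar Y)
    (hexp : ∀ X : Set L, X ⊆ CNbar X)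
    (hidem : ∀ X : Set L, CNbar (CNbar X) = CNbar X)
    (K Δ : Set L) (hΔK : Δ ⊆ K) (hΔcons : consistent CNbar Δ)
    (hΔmax : ∀ Δ' : Set L, Δ' ⊆ K → consistent CNbar Δ' → Δ ⊆ Δ' → Δ' = Δ) :
    ¬ ∃ X : Set (Set L × L), X ⊆ ArgsOf CNbar K Δ ∧
        ∃ p ∈ ArgsOf CNbar K Δ, attacksArg CNbar X p :=
  args_mcs_conflict_free_general CNbar hmono hexp hidem K Δ hΔcons
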